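/- Let H be an open subgroup of G, i_H : A_Φ(H) → A_Φ(G) the inclusion map and m_H : A_Φ(G) → A_Φ(H) the restriction map. Then i_H**(Λ(A_Φ(H)**)) ⊆ Λ(A_Φ(G)**) and m_H**(Λ(A_Φ(G)**)) ⊆ Λ(A_Φ(H)**), where Λ denotes the topological center with respect to the first Arens product. -/

import Mathlib

open MeasureTheory Filter Topology NormedSpace
open scoped ENNReal ZeroAtInfty

noncomputable section

/-! ### Young functions and the Δ₂ and MA conditions -/

/-- A (real-valued, continuous) Young function. -/
structure IsYoungFunction (Φ : ℝ → ℝ) : Prop where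
  even : ∀ x, Φ (-x) = Φ x
  convexOn : ConvexOn ℝ Set.univ Φ
  nonneg : ∀ x, 0 ≤ Φ x
  map_zero : Φ 0 = 0
  continuous : Continuous Φ
  tendsto_atTop : Tendsto Φ atTop atTop

/-- `(Φ, Ψ)` is a complementary pair of Young functions:
`Ψ y = sup { x * |y| - Φ x : x ≥ 0 }`. -/
def IsComplementaryYoungPair (Φ Ψ : ℝ → ℝ) : Prop :=
  IsYoungFunction Φ ∧ IsYoungFunction Ψ ∧
    ∀ y, Ψ y = sSup {z | ∃ x ≥ (0 : ℝ), z = x * |y| - Φ x}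

/-- The Δ₂-condition for a Young function. -/
def HasDeltaTwo (Φ : ℝ → ℝ) : Prop :=
  ∃ k > (0 : ℝ), ∃ x₀ ≥ (0 : ℝ), ∀ x ≥ x₀, Φ (2 * x) ≤ k * Φ x

/-- The Milnes–Akimonič (MA) condition for a Young function. -/
def HasMACondition (Φ : ℝ → ℝ) : Prop :=
  ∀ ε > (0 : ℝ), ∃ β > (1 : ℝ), ∃ x₀ ≥ (0 : ℝ), ∀ x ≥ x₀,
    β * deriv Φ x ≤ deriv Φ ((1 + ε) * x)

/-! ### Orlicz spaces -/

section Orlicz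

variable {G : Type*} [MeasurableSpace G]

/-- Membership in the Orlicz space `L^Φ(G)`. -/
def MemOrlicz (Φ : ℝ → ℝ) (μ : Measure G) (f : G → ℂ) : Prop :=
  AEStronglyMeasurable f μ ∧ ∃ β > (0 : ℝ), ∫⁻ x, ENNReal.ofReal (Φ (β * ‖f x‖)) ∂μ < ⊤

/-- The Luxemburg (gauge) norm `N_Φ(f)` on `L^Φ(G)`. -/
def luxemburgNorm (Φ : ℝ → ℝ) (μ : Measure G) (f : G → ℂ) : ℝ :=
  sInf {k | 0 < k ∧ ∫⁻ x, ENNReal.ofReal (Φ (‖f x‖ / k)) ∂μ ≤ 1}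

/-- The Orlicz norm `‖f‖_Φ`, where `Ψ` is the Young function complementary to `Φ`. -/
def orliczNorm (Φ Ψ : ℝ → ℝ) (μ : Measure G) (f : G → ℂ) : ℝ :=
  sSup {r | ∃ g : G → ℂ, (∫⁻ x, ENNReal.ofReal (Ψ (‖g x‖)) ∂μ ≤ 1) ∧
    r = ∫ x, ‖f x‖ * ‖g x‖ ∂μ}

end Orlicz

/-! ### The Orlicz Figà-Talamanca Herz algebra `A_Φ(G)` -/

section Aphi

variable {G : Type*} [MeasurableSpace G] [Group G] [TopologicalSpace G]

/-- `f, g` give an admissible representation `u = ∑' n, f n ⋆ (g n)ᵛ` of `u` for `A_Φ(G)`,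
where `ǧ x = g x⁻¹`, so that `(f ⋆ ǧ) x = ∫ y, f y * g (x⁻¹ * y)`. -/
def IsAphiDecomposition (μ : Measure G) (Φ Ψ : ℝ → ℝ) (u : G → ℂ)
    (f g : ℕ → G → ℂ) : Prop :=
  (∀ n, MemOrlicz Φ μ (f n)) ∧ (∀ n, MemOrlicz Ψ μ (g n)) ∧
    Summable (fun n => luxemburgNorm Φ μ (f n) * orliczNorm Ψ Φ μ (g n)) ∧
    ∀ x, u x = ∑' n, ∫ y, f n y * g n (x⁻¹ * y) ∂μ

/-- Membership in `A_Φ(G)` for an element of `C₀(G, ℂ)`. -/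
def MemAphi (μ : Measure G) (Φ Ψ : ℝ → ℝ) (u : C₀(G, ℂ)) : Prop :=
  ∃ f g, IsAphiDecomposition μ Φ Ψ (⇑u) f g

/-- The norm of `A_Φ(G)`. -/
def aphiNorm (μ : Measure G) (Φ Ψ : ℝ → ℝ) (u : C₀(G, ℂ)) : ℝ :=
  sInf {r | ∃ f g, IsAphiDecomposition μ Φ Ψ (⇑u) f g ∧
    r = ∑' n, luxemburgNorm Φ μ (f n) * orliczNorm Ψ Φ μ (g n)}

/-- `A`, together with the embedding `ι : A → C₀(G, ℂ)`, *is* the Orlicz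
Figà-Talamanca Herz algebra `A_Φ(G)`: a commutative Banach algebra of
`C₀`-functions (with pointwise operations) whose members are exactly the functions
admitting an `A_Φ`-decomposition, and carrying the `A_Φ(G)`-norm. -/
structure IsOrliczFigaTalamancaHerzAlgebra (μ : Measure G) (Φ Ψ : ℝ → ℝ)
    (A : Type*) [NonUnitalNormedCommRing A] [NormedSpace ℂ A]
    (ι : A → C₀(G, ℂ)) : Prop where
  injective : Function.Injective ι
  map_add : ∀ a b, ι (a + b) = ι a + ι b
  map_smul : ∀ (c : ℂ) (a), ι (c • a) = c • ι a
  map_mul : ∀ a b, ι (a * b) = ι a * ι b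
  mem_range_iff : ∀ u, (∃ a, ι a = u) ↔ MemAphi μ Φ Ψ u
  norm_eq : ∀ a, ‖a‖ = aphiNorm μ Φ Ψ (ι a)

end Aphi

/-! ### The first Arens product on the double dual of a Banach algebra -/

namespace NormedSpace

/-- The topological dual of a normed space (as in the older Mathlib). -/
abbrev Dual (𝕜 : Type*) [NontriviallyNormedField 𝕜] (E : Type*) [SeminormedAddCommGroup E]
    [NormedSpace 𝕜 E] : Type _ :=
  E →L[𝕜] 𝕜

/-- Helper instance (as in the older Mathlib). -/
instance Dual.instNormedSpace (𝕜 : Type*) [NontriviallyNormedField 𝕜] (E : Type*)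
    [SeminormedAddCommGroup E] [NormedSpace 𝕜 E] : NormedSpace 𝕜 (Dual 𝕜 E) :=
  inferInstance

/-- Helper instance (as in the older Mathlib). -/
instance Dual.instSeminormedAddCommGroup (𝕜 : Type*) [NontriviallyNormedField 𝕜] (E : Type*)
    [SeminormedAddCommGroup E] [NormedSpace 𝕜 E] : SeminormedAddCommGroup (Dual 𝕜 E) :=
  inferInstance

/-- The identity map from the dual to the weak dual (as in the older Mathlib). -/
def Dual.toWeakDual {𝕜 : Type*} [NontriviallyNormedField 𝕜] {E : Type*}
    [SeminormedAddCommGroup E] [NormedSpace 𝕜 E] : Dual 𝕜 E ≃ₗ[𝕜] WeakDual 𝕜 E :=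
  StrongDual.toWeakDual

end NormedSpace

/-- The identity map from the weak dual to the dual (as in the older Mathlib). -/
def WeakDual.toNormedDual {𝕜 : Type*} [NontriviallyNormedField 𝕜] {E : Type*}
    [SeminormedAddCommGroup E] [NormedSpace 𝕜 E] : WeakDual 𝕜 E ≃ₗ[𝕜] NormedSpace.Dual 𝕜 E :=
  WeakDual.toStrongDual

section Arens

variable (A : Type*) [NonUnitalNormedRing A] [NormedSpace ℂ A]
  [SMulCommClass ℂ A A] [IsScalarTower ℂ A A]

open ContinuousLinearMap in
/-- The module action `u • T` of `A` on its dual: `⟨u • T, v⟩ = ⟨T, u * v⟩`. -/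
def dotAct (u : A) (T : Dual ℂ A) : Dual ℂ A :=
  T.comp (ContinuousLinearMap.mul ℂ A u)

open ContinuousLinearMap in
/-- The action `dotAct` as a continuous bilinear map, `(T, u) ↦ u • T`. -/
def dotActR : Dual ℂ A →L[ℂ] A →L[ℂ] Dual ℂ A :=
  ((compL ℂ A (A →L[ℂ] A) (Dual ℂ A)).flip (ContinuousLinearMap.mul ℂ A)).comp
    (compL ℂ A A ℂ)

open ContinuousLinearMap in
/-- The operation `Γ ⊙ T` on `A** × A*`: `⟨Γ ⊙ T, u⟩ = ⟨Γ, u • T⟩`. -/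
def arensOdot : Dual ℂ (Dual ℂ A) →L[ℂ] Dual ℂ A →L[ℂ] Dual ℂ A :=
  ((compL ℂ (Dual ℂ A) (A →L[ℂ] Dual ℂ A) (Dual ℂ A)).flip (dotActR A)).comp
    (compL ℂ A (Dual ℂ A) ℂ)

/-- The first Arens product `Γ' □ Γ` on the double dual `A**`:
`⟨Γ' □ Γ, T⟩ = ⟨Γ', Γ ⊙ T⟩`. -/
def arens (Γ' Γ : Dual ℂ (Dual ℂ A)) : Dual ℂ (Dual ℂ A) :=
  Γ'.comp (arensOdot A Γ)

/-- The space `UCB_Ψ(Ĝ) = A* ⬝ A`: the norm closure in `A*` of the linear span of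
`{u • T : u ∈ A, T ∈ A*}`. -/
def UCBSubmodule : Submodule ℂ (Dual ℂ A) :=
  (Submodule.span ℂ {T | ∃ (u : A) (S : Dual ℂ A), T = dotAct A u S}).topologicalClosure

variable {A} in
theorem dotAct_mem_UCBSubmodule (u : A) (S : Dual ℂ A) :
    dotAct A u S ∈ UCBSubmodule A :=
  Submodule.le_topologicalClosure _ (Submodule.subset_span ⟨u, S, rfl⟩)

variable {A} in
/-- The restriction of `Γ ∈ A**` to the subspace `UCB_Ψ(Ĝ) ⊆ A*`. -/
def restrictToUCB (Γ : Dual ℂ (Dual ℂ A)) : Dual ℂ ↥(UCBSubmodule A) :=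
  Γ.comp (UCBSubmodule A).subtypeL

end Arens

/-! ### Dual maps, supports, radicals, topological centres, amenability -/

/-- The adjoint (dual map) of a continuous linear map. -/
def dualMapL {E F : Type*} [NormedAddCommGroup E] [NormedSpace ℂ E]
    [NormedAddCommGroup F] [NormedSpace ℂ F] (m : E →L[ℂ] F) :
    Dual ℂ F →L[ℂ] Dual ℂ E :=
  (ContinuousLinearMap.compL ℂ E F ℂ).flip m

section Support

variable {G : Type*} [TopologicalSpace G] {A : Type*} [NonUnitalNormedCommRing A]
  [NormedSpace ℂ A]

/-- The support of a functional `T ∈ A* = PM_Ψ(G)`: `x ∉ supp T` iff there is a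
neighbourhood `V` of `x` such that `⟨T, v⟩ = 0` for all `v ∈ A` supported in `V`. -/
def pmSupport (ι : A → C₀(G, ℂ)) (T : Dual ℂ A) : Set G :=
  {x | ∀ V ∈ nhds x, ∃ a : A, tsupport ⇑(ι a) ⊆ V ∧ T a ≠ 0}

end Support

/-- `z` is left quasi-regular with respect to the multiplication `mul`:
there is `b` with `b + z + b * z = 0` (i.e. `1 + z` has a left inverse `1 + b`
in the unitization). -/
def IsLeftQuasiRegularWith {R : Type*} [AddCommGroup R] (mul : R → R → R) (z : R) : Prop :=
  ∃ b, b + z + mul b z = 0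

/-- Membership in the Jacobson radical of the (possibly non-unital) ring `(R, +, mul)`:
every element of the right ideal generated by `a` is left quasi-regular. -/
def MemJacobsonRadicalWith {R : Type*} [AddCommGroup R] (mul : R → R → R) (a : R) : Prop :=
  ∀ (x : R) (n : ℤ), IsLeftQuasiRegularWith mul (mul a x + n • a)

/-- The (possibly non-unital) ring `(R, +, mul)` is semi-simple: its Jacobson radical
is `{0}`. -/
def IsSemisimpleWith {R : Type*} [AddCommGroup R] (mul : R → R → R) : Prop :=
  ∀ a, MemJacobsonRadicalWith mul a → a = 0

/-- The topological centre of the dual of `E` with respect to a product `mul` on the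
dual: the set of all `m` such that `m' ↦ mul m m'` is `w*`-`w*`-continuous. -/
def topCenterWith {E : Type*} [NormedAddCommGroup E] [NormedSpace ℂ E]
    (mul : Dual ℂ E → Dual ℂ E → Dual ℂ E) : Set (Dual ℂ E) :=
  {m | Continuous fun m' : WeakDual ℂ E =>
    Dual.toWeakDual (mul m (WeakDual.toNormedDual m'))}

section Amenable

variable {G : Type*} [MeasurableSpace G] [Group G]

/-- Amenability of `G`: there is a positive, norm-one, left translation invariant
linear functional on `L^∞(G)`. -/
def HasLeftInvariantMean (μ : Measure G) : Prop :=
  ∃ Λ : Lp ℝ ⊤ μ →L[ℝ] ℝ, ‖Λ‖ = 1 ∧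
    (∀ f : Lp ℝ ⊤ μ, (∀ᵐ y ∂μ, 0 ≤ f y) → 0 ≤ Λ f) ∧
    ∀ (x : G) (f g : Lp ℝ ⊤ μ), (∀ᵐ y ∂μ, g y = f (x⁻¹ * y)) → Λ g = Λ f

end Amenable

/-- A normed space is weakly sequentially complete if every weakly Cauchy sequence
converges weakly. -/
def WeaklySequentiallyComplete (E : Type*) [NormedAddCommGroup E] [NormedSpace ℂ E] : Prop :=
  ∀ u : ℕ → E, (∀ T : Dual ℂ E, CauchySeq fun n => T (u n)) →
    ∃ x : E, ∀ T : Dual ℂ E, Tendsto (fun n => T (u n)) atTop (nhds (T x))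

section PF

variable {G : Type*} [MeasurableSpace G] [Group G] [TopologicalSpace G]

/-- The algebra of `Ψ`-pseudofunctions `PF_Ψ(G)`, realised inside `A_Φ(G)* = PM_Ψ(G)`:
the norm closure of the span of the functionals induced by `L¹(G)`-functions. -/
def PFSubmodule (μ : Measure G) {A : Type*} [NonUnitalNormedCommRing A]
    [NormedSpace ℂ A] (ι : A → C₀(G, ℂ)) : Submodule ℂ (Dual ℂ A) :=
  (Submodule.span ℂ {T | ∃ f : G → ℂ, Integrable f μ ∧
    ∀ a, T a = ∫ x, f x * ι a x ∂μ}).topologicalClosure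

end PF

/-! The restriction `m` is a module map over the extension by zero `i` and vice versa:
`i (b * m a) = i b * a` and `m (a * i b) = m a * b`. Pushing these identities through the
module action of the algebra on its dual and through `⊙` gives
`i** Γ □ Γ' = i** (Γ □ m** Γ')` and `m** Γ □ Γ' = m** (Γ □ i** Γ')`; since `i**` and `m**`
are weak-* continuous, left multiplication by `i** Γ` (resp. `m** Γ`) is weak-* continuous
whenever left multiplication by `Γ` is. -/

theorem continuous_dualMapL_weakDual {E F : Type*} [NormedAddCommGroup E] [NormedSpace ℂ E]
    [NormedAddCommGroup F] [NormedSpace ℂ F] (p : E →L[ℂ] F) :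
    Continuous fun T : WeakDual ℂ F => Dual.toWeakDual (dualMapL p (WeakDual.toNormedDual T)) :=
  WeakDual.continuous_of_continuous_eval fun x => WeakDual.eval_continuous (p x)

section Intertwining

variable {A B : Type*} [NonUnitalNormedRing A] [NormedSpace ℂ A] [SMulCommClass ℂ A A]
  [IsScalarTower ℂ A A] [NonUnitalNormedRing B] [NormedSpace ℂ B] [SMulCommClass ℂ B B]
  [IsScalarTower ℂ B B] {p : B →L[ℂ] A} {q : A →L[ℂ] B}

theorem dotAct_map_eq_dualMapL (hpq : ∀ b a, p (b * q a) = p b * a) (b : B) (T : Dual ℂ A) :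
    dotAct A (p b) T = dualMapL q (dotAct B b (dualMapL p T)) := by
  ext a
  exact congrArg T (hpq b a).symm

theorem dualMapL_arensOdot (hpq : ∀ b a, p (b * q a) = p b * a) (Γ : Dual ℂ (Dual ℂ A))
    (T : Dual ℂ A) :
    dualMapL p (arensOdot A Γ T) = arensOdot B (dualMapL (dualMapL q) Γ) (dualMapL p T) := by
  ext b
  exact congrArg Γ (dotAct_map_eq_dualMapL hpq b T)

theorem arens_dualMapL_dualMapL (hpq : ∀ b a, p (b * q a) = p b * a)
    (Γ : Dual ℂ (Dual ℂ B)) (Γ' : Dual ℂ (Dual ℂ A)) :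
    arens A (dualMapL (dualMapL p) Γ) Γ' =
      dualMapL (dualMapL p) (arens B Γ (dualMapL (dualMapL q) Γ')) := by
  ext T
  exact congrArg Γ (dualMapL_arensOdot hpq Γ' T)

theorem dualMapL_dualMapL_mem_topCenterWith (hpq : ∀ b a, p (b * q a) = p b * a)
    {Γ : Dual ℂ (Dual ℂ B)} (hΓ : Γ ∈ topCenterWith (arens B)) :
    dualMapL (dualMapL p) Γ ∈ topCenterWith (arens A) := by
  have hcomp := (continuous_dualMapL_weakDual (dualMapL p)).comp
    (hΓ.comp (continuous_dualMapL_weakDual (dualMapL q)))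
  exact hcomp.congr fun Γ' => (arens_dualMapL_dualMapL hpq Γ (WeakDual.toNormedDual Γ')).symm

end Intertwining

section ExtensionRestriction

variable {G : Type*} [TopologicalSpace G] {S : Set G}
  {A B : Type*} [NonUnitalNormedRing A] [NonUnitalNormedRing B] [NormedSpace ℂ A]
  [NormedSpace ℂ B] {ι : A → C₀(G, ℂ)} {ιB : B → C₀(S, ℂ)} {i : B →L[ℂ] A} {m : A →L[ℂ] B}

theorem extension_map_mul_restriction (hι : Function.Injective ι)
    (hι_mul : ∀ a a', ι (a * a') = ι a * ι a') (hιB_mul : ∀ b b', ιB (b * b') = ιB b * ιB b')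
    (hi : ∀ (b : B) (x : S), ι (i b) x = ιB b x) (hi' : ∀ (b : B) x, x ∉ S → ι (i b) x = 0)
    (hm : ∀ (a : A) (x : S), ιB (m a) x = ι a x) (b : B) (a : A) :
    i (b * m a) = i b * a := by
  refine hι (ZeroAtInftyContinuousMap.ext fun x => ?_)
  rw [hι_mul, ZeroAtInftyContinuousMap.mul_apply]
  by_cases hx : x ∈ S
  · rw [hi _ ⟨x, hx⟩, hi _ ⟨x, hx⟩, hιB_mul, ZeroAtInftyContinuousMap.mul_apply, hm]
  · rw [hi' _ _ hx, hi' _ _ hx, zero_mul]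

theorem restriction_map_mul_extension (hιB : Function.Injective ιB)
    (hι_mul : ∀ a a', ι (a * a') = ι a * ι a') (hιB_mul : ∀ b b', ιB (b * b') = ιB b * ιB b')
    (hi : ∀ (b : B) (x : S), ι (i b) x = ιB b x) (hm : ∀ (a : A) (x : S), ιB (m a) x = ι a x)
    (a : A) (b : B) :
    m (a * i b) = m a * b := by
  refine hιB (ZeroAtInftyContinuousMap.ext fun x => ?_)
  rw [hιB_mul, ZeroAtInftyContinuousMap.mul_apply, hm, hm, hι_mul,
    ZeroAtInftyContinuousMap.mul_apply, hi]

end ExtensionRestriction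

/-! ### Standing hypotheses -/

variable {G : Type*} [Group G] [TopologicalSpace G] [IsTopologicalGroup G]
  [LocallyCompactSpace G] [MeasurableSpace G] [BorelSpace G]

theorem topCenter_maps_of_open_subgroup_general
    (μ : Measure G) (Φ Ψ : ℝ → ℝ)
    (A : Type*) [NonUnitalNormedCommRing A] [NormedSpace ℂ A] [SMulCommClass ℂ A A]
    [IsScalarTower ℂ A A] (ι : A → C₀(G, ℂ))
    (hA : IsOrliczFigaTalamancaHerzAlgebra μ Φ Ψ A ι)
    (H : Subgroup G)
    (ν : Measure H)
    (B : Type*) [NonUnitalNormedCommRing B] [NormedSpace ℂ B] [SMulCommClass ℂ B B]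
    [IsScalarTower ℂ B B] (ιB : B → C₀(H, ℂ))
    (hB : IsOrliczFigaTalamancaHerzAlgebra ν Φ Ψ B ιB)
    (i : B →L[ℂ] A) (hi : ∀ (b : B) (x : H), ι (i b) ↑x = ιB b x)
    (hi' : ∀ (b : B) (x : G), x ∉ H → ι (i b) x = 0)
    (m : A →L[ℂ] B) (hm : ∀ (a : A) (x : H), ιB (m a) x = ι a ↑x) :
    (∀ Γ ∈ topCenterWith (arens B), dualMapL (dualMapL i) Γ ∈ topCenterWith (arens A)) ∧
    (∀ Γ ∈ topCenterWith (arens A), dualMapL (dualMapL m) Γ ∈ topCenterWith (arens B)) :=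
  ⟨fun _ => dualMapL_dualMapL_mem_topCenterWith
      (extension_map_mul_restriction (S := (H : Set G)) hA.injective hA.map_mul hB.map_mul
        hi hi' hm),
    fun _ => dualMapL_dualMapL_mem_topCenterWith
      (restriction_map_mul_extension (S := (H : Set G)) hB.injective hA.map_mul hB.map_mul
        hi hm)⟩

/-- Let `H` be an open subgroup of `G`, `i : A_Φ(H) → A_Φ(G)` the
inclusion and `m : A_Φ(G) → A_Φ(H)` the restriction map.  Then
`i**(Λ(A_Φ(H)**)) ⊆ Λ(A_Φ(G)**)` and `m**(Λ(A_Φ(G)**)) ⊆ Λ(A_Φ(H)**)`, where `Λ` is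
the topological centre with respect to the first Arens product. -/
theorem topCenter_maps_of_open_subgroup
    (μ : Measure G) [μ.IsHaarMeasure] (Φ Ψ : ℝ → ℝ)
    (hpair : IsComplementaryYoungPair Φ Ψ) (hΦΔ : HasDeltaTwo Φ) (hΨΔ : HasDeltaTwo Ψ)
    (A : Type*) [NonUnitalNormedCommRing A] [NormedSpace ℂ A] [SMulCommClass ℂ A A]
    [IsScalarTower ℂ A A] [CompleteSpace A] (ι : A → C₀(G, ℂ))
    (hA : IsOrliczFigaTalamancaHerzAlgebra μ Φ Ψ A ι)
    (H : Subgroup G) (hH : IsOpen (H : Set G))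
    (ν : Measure H) (hν : ν.IsHaarMeasure)
    (B : Type*) [NonUnitalNormedCommRing B] [NormedSpace ℂ B] [SMulCommClass ℂ B B]
    [IsScalarTower ℂ B B] [CompleteSpace B] (ιB : B → C₀(H, ℂ))
    (hB : IsOrliczFigaTalamancaHerzAlgebra ν Φ Ψ B ιB)
    (i : B →L[ℂ] A) (hi : ∀ (b : B) (x : H), ι (i b) ↑x = ιB b x)
    (hi' : ∀ (b : B) (x : G), x ∉ H → ι (i b) x = 0)
    (m : A →L[ℂ] B) (hm : ∀ (a : A) (x : H), ιB (m a) x = ι a ↑x) :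
    (∀ Γ ∈ topCenterWith (arens B), dualMapL (dualMapL i) Γ ∈ topCenterWith (arens A)) ∧
    (∀ Γ ∈ topCenterWith (arens A), dualMapL (dualMapL m) Γ ∈ topCenterWith (arens B)) :=
  topCenter_maps_of_open_subgroup_general μ Φ Ψ A ι hA H ν B ιB hB i hi hi' m hm
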